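/- arXiv:2507.07943 — 2 statements merged into one kernel-verified Lean document; each statement's English description precedes it below -/
import Mathlib

section
/- Let D be a probability distribution supported on [0,1], let X and Y be independent samples from D, and suppose α ≥ 1/2 satisfies Pr[X − Y ≤ x] ≤ α·(x+1) for all x ∈ [-1,1]. Then for every t ∈ (π, 2π), α ≥ 1/2 + (−sin t)/(6t + 2·sin t). In particular, taking t = 4.5 yields α ≥ 1/2 + (−sin 4.5)/(27 + 2·sin 4.5) > 0.539. -/
/-!
Write `Z = X - Y` and `F` for its distribution function. `Z` is symmetric and lives on `[-1, 1]`,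
and `E cos (t Z) = |E exp (i t X)|² ≥ 0`. Integration by parts against `F` turns this into
`0 ≤ cos t + t ∫_{-1}^{1} sin (t s) F(s) ds`. By symmetry the hypothesis `F(s) ≤ α (s + 1)` also
gives `F(s) ≥ 1 - α (1 - s)`; on each of the four intervals cut out by `±π/t` the sign of
`sin (t s)` is constant, so one of these two linear bounds bounds the integrand from above.
Integrating explicitly yields `0 ≤ 2 α sin t / t + 6 α - 3`, which is the claim.
-/

open MeasureTheory ProbabilityTheory Set Real

theorem sin_nonneg_of_neg_two_pi_le_of_le_neg_pi {x : ℝ} (h₁ : -(2 * π) ≤ x) (h₂ : x ≤ -π) :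
    0 ≤ sin x := by
  rw [← sin_add_two_pi]
  exact sin_nonneg_of_nonneg_of_le_pi (by linarith) (by linarith)

theorem sin_nonpos_of_pi_le_of_le_two_pi {x : ℝ} (h₁ : π ≤ x) (h₂ : x ≤ 2 * π) : sin x ≤ 0 := by
  rw [← neg_nonneg, ← sin_sub_pi]
  exact sin_nonneg_of_nonneg_of_le_pi (by linarith) (by linarith)

noncomputable def sinMulAffinePrimitive (t c d s : ℝ) : ℝ :=
  -(c * s + d) * cos (t * s) / t + c * sin (t * s) / t ^ 2

theorem integral_sin_mul_affine {t : ℝ} (ht : t ≠ 0) (c d a b : ℝ) :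
    ∫ s in a..b, sin (t * s) * (c * s + d) =
      sinMulAffinePrimitive t c d b - sinMulAffinePrimitive t c d a := by
  refine intervalIntegral.integral_eq_sub_of_hasDerivAt (fun s _ => ?_)
    ((by fun_prop : Continuous fun s => sin (t * s) * (c * s + d)).intervalIntegrable _ _)
  have hlin : HasDerivAt (fun s => t * s) t s := by simpa using (hasDerivAt_id s).const_mul t
  have haff : HasDerivAt (fun s => -(c * s + d)) (-c) s :=
    (((hasDerivAt_id' s).const_mul c).add_const d).neg.congr_deriv (by ring)
  convert ((haff.mul hlin.cos).div_const t).add ((hlin.sin.const_mul c).div_const (t ^ 2)) using 1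
  · rfl
  · field_simp
    ring

theorem integral_sin_mul_le_of_le {t a b c d : ℝ} {F : ℝ → ℝ} (ht : t ≠ 0) (hab : a ≤ b)
    (hF : IntervalIntegrable F volume a b)
    (hle : ∀ s ∈ Icc a b, sin (t * s) * F s ≤ sin (t * s) * (c * s + d)) :
    ∫ s in a..b, sin (t * s) * F s ≤
      sinMulAffinePrimitive t c d b - sinMulAffinePrimitive t c d a := by
  rw [← integral_sin_mul_affine ht]
  exact intervalIntegral.integral_mono_on hab (hF.continuousOn_mul (by fun_prop))
    ((by fun_prop : Continuous fun s => sin (t * s) * (c * s + d)).intervalIntegrable _ _) hle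

theorem mul_integral_sin_mul_le {t α : ℝ} {F : ℝ → ℝ} (hπt : π < t) (ht : t < 2 * π)
    (hF : IntervalIntegrable F volume (-1) 1)
    (hup : ∀ s ∈ Icc (-1 : ℝ) 1, F s ≤ α * (s + 1))
    (hlow : ∀ s ∈ Icc (-1 : ℝ) 1, 1 - α * (1 - s) ≤ F s) :
    t * ∫ s in (-1)..1, sin (t * s) * F s ≤ 2 * α * sin t / t + 6 * α - 3 - cos t := by
  have ht0 : 0 < t := pi_pos.trans hπt
  set p := π / t
  have hp0 : 0 < p := div_pos pi_pos ht0
  have hp1 : p < 1 := (div_lt_one ht0).2 hπt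
  have htp : t * p = π := mul_div_cancel₀ _ ht0.ne'
  have htp' : t * -p = -π := by rw [mul_neg, htp]
  have hts : ∀ {s u : ℝ}, s ≤ u → t * s ≤ t * u := fun h => mul_le_mul_of_nonneg_left h ht0.le
  have hFab : ∀ a b, -1 ≤ a → a ≤ b → b ≤ 1 → IntervalIntegrable F volume a b :=
    fun a b ha hab hb => hF.mono_set <|
      uIcc_subset_uIcc (by simp [uIcc, ha, hab.trans hb]) (by simp [uIcc, hb, ha.trans hab])
  have hint : ∀ a b, -1 ≤ a → a ≤ b → b ≤ 1 →
      IntervalIntegrable (fun s => sin (t * s) * F s) volume a b :=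
    fun a b ha hab hb => (hFab a b ha hab hb).continuousOn_mul (by fun_prop)
  have hpiece : ∀ a b c d, -1 ≤ a → a ≤ b → b ≤ 1 →
      (∀ s ∈ Icc a b, sin (t * s) * F s ≤ sin (t * s) * (c * s + d)) →
      ∫ s in a..b, sin (t * s) * F s ≤
        sinMulAffinePrimitive t c d b - sinMulAffinePrimitive t c d a :=
    fun a b c d ha hab hb => integral_sin_mul_le_of_le ht0.ne' hab (hFab a b ha hab hb)
  have h₁ := hpiece (-1) (-p) α α le_rfl (by linarith) (by linarith) fun s hs => by
    have := sin_nonneg_of_neg_two_pi_le_of_le_neg_pi (x := t * s)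
      (by nlinarith [hts hs.1]) (by linarith [hts hs.2])
    nlinarith [hup s ⟨hs.1, by linarith [hs.2]⟩]
  have h₂ := hpiece (-p) 0 α (1 - α) (by linarith) (by linarith) (by linarith) fun s hs => by
    have := sin_nonpos_of_nonpos_of_neg_pi_le (x := t * s)
      (by nlinarith [hts hs.2]) (by linarith [hts hs.1])
    nlinarith [hlow s ⟨by linarith [hs.1], by linarith [hs.2]⟩]
  have h₃ := hpiece 0 p α α (by linarith) hp0.le hp1.le fun s hs => by
    have := sin_nonneg_of_nonneg_of_le_pi (x := t * s)
      (by nlinarith [hts hs.1]) (by linarith [hts hs.2])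
    nlinarith [hup s ⟨by linarith [hs.1], by linarith [hs.2]⟩]
  have h₄ := hpiece p 1 α (1 - α) (by linarith) hp1.le le_rfl fun s hs => by
    have := sin_nonpos_of_pi_le_of_le_two_pi (x := t * s)
      (by linarith [hts hs.1]) (by nlinarith [hts hs.2])
    nlinarith [hlow s ⟨by linarith [hs.1], hs.2⟩]
  rw [← intervalIntegral.integral_add_adjacent_intervals
      (hint (-1) p le_rfl (by linarith) hp1.le) (hint p 1 (by linarith) hp1.le le_rfl),
    ← intervalIntegral.integral_add_adjacent_intervals
      (hint (-1) 0 le_rfl (by linarith) zero_le_one) (hint 0 p (by linarith) hp0.le hp1.le),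
    ← intervalIntegral.integral_add_adjacent_intervals
      (hint (-1) (-p) le_rfl (by linarith) (by linarith))
      (hint (-p) 0 (by linarith) (by linarith) zero_le_one)]
  calc _ ≤ t * (sinMulAffinePrimitive t α α (-p) - sinMulAffinePrimitive t α α (-1) +
        (sinMulAffinePrimitive t α (1 - α) 0 - sinMulAffinePrimitive t α (1 - α) (-p)) +
        (sinMulAffinePrimitive t α α p - sinMulAffinePrimitive t α α 0) +
        (sinMulAffinePrimitive t α (1 - α) 1 - sinMulAffinePrimitive t α (1 - α) p)) := by
        gcongr
    _ = 2 * α * sin t / t + 6 * α - 3 - cos t := by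
      simp only [sinMulAffinePrimitive, htp, htp', mul_one, mul_zero, mul_neg_one, cos_neg,
        sin_neg, cos_pi, sin_pi, cos_zero, sin_zero]
      field_simp
      ring

theorem integral_eq_sub_integral_deriv_mul_cdf {ρ : Measure ℝ} [IsProbabilityMeasure ρ]
    {a b : ℝ} (hρ : ∀ᵐ z ∂ρ, z ∈ Icc a b) {g g' : ℝ → ℝ} (hg : ∀ s, HasDerivAt g (g' s) s)
    (hg' : Continuous g') :
    ∫ z, g z ∂ρ = g b - ∫ s in a..b, g' s * cdf ρ s := by
  have hab : a ≤ b := by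
    obtain ⟨z, hz⟩ := hρ.exists
    exact hz.1.trans hz.2
  set f : ℝ → ℝ → ℝ := fun z s => if z ≤ s then g' s else 0
  have hf_meas : Measurable (Function.uncurry f) :=
    Measurable.ite (measurableSet_le measurable_fst measurable_snd)
      (hg'.measurable.comp measurable_snd) measurable_const
  have hf_int :
      Integrable (Function.uncurry f) (ρ.prod ((volume : Measure ℝ).restrict (Icc a b))) := by
    refine (hg'.integrableOn_Icc.norm.comp_snd ρ).mono' hf_meas.aestronglyMeasurable
      (ae_of_all _ fun p => ?_)
    by_cases h : p.1 ≤ p.2 <;> simp [f, Function.uncurry, h]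
  have hg_eq : ∀ z ∈ Icc a b, g z = g b - ∫ s in Icc a b, f z s := by
    intro z hz
    have hind : (fun s => f z s) = (Ici z).indicator g' := by
      ext s; simp [f, indicator]
    have hinter : Ici z ∩ Icc a b = Icc z b :=
      Set.ext fun s => ⟨fun h => ⟨h.1, h.2.2⟩, fun h => ⟨h.1, hz.1.trans h.1, h.2⟩⟩
    rw [hind, integral_indicator measurableSet_Ici, Measure.restrict_restrict measurableSet_Ici,
      hinter, integral_Icc_eq_integral_Ioc, ← intervalIntegral.integral_of_le hz.2,
      intervalIntegral.integral_eq_sub_of_hasDerivAt (fun s _ => hg s)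
        (hg'.intervalIntegrable _ _)]
    ring
  have hf_cdf : ∀ s, ∫ z, f z s ∂ρ = g' s * cdf ρ s := by
    intro s
    have hind : (fun z => f z s) = (Iic s).indicator fun _ => g' s := by
      ext z; simp [f, indicator]
    rw [hind, integral_indicator_const _ measurableSet_Iic, cdf_eq_real, smul_eq_mul, mul_comm]
  calc ∫ z, g z ∂ρ = ∫ z, (g b - ∫ s in Icc a b, f z s) ∂ρ := integral_congr_ae (hρ.mono hg_eq)
    _ = g b - ∫ z, (∫ s in Icc a b, f z s) ∂ρ := by
      have hint : Integrable (fun z => ∫ s in Icc a b, f z s) ρ := hf_int.integral_prod_left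
      rw [integral_sub (integrable_const _) hint, integral_const]
      simp
    _ = g b - ∫ s in a..b, g' s * cdf ρ s := by
      rw [integral_integral_swap hf_int, intervalIntegral.integral_of_le hab,
        ← integral_Icc_eq_integral_Ioc]
      simp_rw [hf_cdf]

theorem one_le_cdf_add_cdf_neg (ρ : Measure ℝ) [IsProbabilityMeasure ρ] [ρ.IsNegInvariant]
    (s : ℝ) : 1 ≤ cdf ρ s + cdf ρ (-s) := by
  have hneg : ρ.real (Iic (-s)) = ρ.real (Ici s) := by
    rw [measureReal_def, measureReal_def, ← Measure.measure_neg ρ (Iic (-s)), neg_Iic, neg_neg]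
  calc (1 : ℝ) = ρ.real (Iic s ∪ Ici s) := by rw [Iic_union_Ici, probReal_univ]
    _ ≤ ρ.real (Iic s) + ρ.real (Ici s) := measureReal_union_le _ _
    _ = cdf ρ s + cdf ρ (-s) := by rw [cdf_eq_real, cdf_eq_real, hneg]

theorem re_charFun_eq_integral_cos (ρ : Measure ℝ) [IsFiniteMeasure ρ] (t : ℝ) :
    (charFun ρ t).re = ∫ z, cos (t * z) ∂ρ := by
  rw [charFun_apply_real, ← RCLike.re_eq_complex_re, ← integral_re]
  · simp_rw [RCLike.re_eq_complex_re, ← Complex.ofReal_mul, Complex.exp_ofReal_mul_I_re]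
  · exact (integrable_const (1 : ℝ)).mono (by fun_prop)
      (by simp [← Complex.ofReal_mul, Complex.norm_exp_ofReal_mul_I])

theorem integral_cos_map_sub_nonneg {Ω : Type*} [MeasurableSpace Ω] {μ : Measure Ω}
    [IsFiniteMeasure μ] {X Y : Ω → ℝ} (hX : Measurable X) (hY : Measurable Y)
    (hind : IndepFun X Y μ) (hXY : μ.map X = μ.map Y) (t : ℝ) :
    0 ≤ ∫ z, cos (t * z) ∂(μ.map fun ω => X ω - Y ω) := by
  have hsub : (fun ω => X ω - Y ω) = fun ω => X ω + -1 * Y ω := by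
    ext ω; ring
  have hneg : charFun (μ.map fun ω => -1 * Y ω) t = starRingEnd ℂ (charFun (μ.map Y) t) := by
    rw [charFun_map_mul_comp hY.aemeasurable, neg_one_mul, charFun_neg]
  have hind' : IndepFun X (fun ω => -1 * Y ω) μ :=
    hind.comp measurable_id (measurable_const_mul _)
  rw [← re_charFun_eq_integral_cos, hsub,
    hind'.charFun_map_fun_add_eq_mul hX.aemeasurable (by fun_prop),
    Pi.mul_apply, hneg, hXY, Complex.mul_conj]
  exact Complex.normSq_nonneg _

theorem isNegInvariant_map_sub {Ω : Type*} [MeasurableSpace Ω] {μ : Measure Ω}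
    [IsFiniteMeasure μ] {X Y : Ω → ℝ} (hX : Measurable X) (hY : Measurable Y)
    (hind : IndepFun X Y μ) (hXY : μ.map X = μ.map Y) :
    (μ.map fun ω => X ω - Y ω).IsNegInvariant := by
  set ν := μ.map Y
  have hjoint : μ.map (fun ω => (X ω, Y ω)) = ν.prod ν := by
    rw [(indepFun_iff_map_prod_eq_prod_map_map hX.aemeasurable hY.aemeasurable).1 hind, hXY]
  have hlaw : μ.map (fun ω => X ω - Y ω) = (ν.prod ν).map fun p => p.1 - p.2 := by
    rw [← hjoint, Measure.map_map (by fun_prop) (by fun_prop)]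
    rfl
  constructor
  rw [Measure.neg_def, hlaw, Measure.map_map (by fun_prop) (by fun_prop)]
  conv_rhs => rw [← Measure.prod_swap]
  rw [Measure.map_map (by fun_prop) (by fun_prop)]
  congr 1
  ext p
  simp

theorem half_add_neg_sin_div_le_of_cdf_le {ρ : Measure ℝ} [IsProbabilityMeasure ρ]
    [ρ.IsNegInvariant] (hρ : ∀ᵐ z ∂ρ, z ∈ Icc (-1 : ℝ) 1) {t α : ℝ} (hπt : π < t)
    (ht : t < 2 * π) (hcdf : ∀ s ∈ Icc (-1 : ℝ) 1, cdf ρ s ≤ α * (s + 1))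
    (hcos : 0 ≤ ∫ z, cos (t * z) ∂ρ) :
    1 / 2 + -sin t / (6 * t + 2 * sin t) ≤ α := by
  have ht0 : 0 < t := pi_pos.trans hπt
  have hderiv : ∀ s, HasDerivAt (fun z => cos (t * z)) (-t * sin (t * s)) s := fun s => by
    simpa [mul_comm] using ((hasDerivAt_id s).const_mul t).cos
  have hlow : ∀ s ∈ Icc (-1 : ℝ) 1, 1 - α * (1 - s) ≤ cdf ρ s := fun s hs => by
    have := hcdf (-s) ⟨by linarith [hs.2], by linarith [hs.1]⟩
    linarith [one_le_cdf_add_cdf_neg ρ s]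
  have hbound := mul_integral_sin_mul_le hπt ht (monotone_cdf ρ).intervalIntegrable hcdf hlow
  rw [integral_eq_sub_integral_deriv_mul_cdf hρ hderiv (by fun_prop)] at hcos
  simp only [mul_assoc, neg_mul, intervalIntegral.integral_neg,
    intervalIntegral.integral_const_mul, mul_one] at hcos
  have hden : 0 < 6 * t + 2 * sin t := by linarith [neg_one_le_sin t, pi_gt_three]
  have hkey : 0 ≤ 2 * α * sin t + (6 * α - 3) * t := by
    have : 0 ≤ 2 * α * sin t / t + 6 * α - 3 := by linarith
    have := mul_nonneg ht0.le this
    rw [mul_sub, mul_add, mul_div_cancel₀ _ ht0.ne'] at this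
    linarith
  rw [div_add_div _ _ two_ne_zero hden.ne', div_le_iff₀ (by positivity)]
  linarith

theorem sin_four_point_five_le : sin 4.5 ≤ -0.9774 := by
  have hcos : cos (3 * π / 2 - 4.5) = -sin 4.5 := by
    rw [show 3 * π / 2 - (4.5 : ℝ) = π - (4.5 - π / 2) by ring, cos_pi_sub, cos_sub_pi_div_two]
  have hx : 3 * π / 2 - 4.5 < 0.21239 := by linarith [pi_lt_d6]
  have hx0 : 0 < 3 * π / 2 - 4.5 := by linarith [pi_gt_d6]
  nlinarith [one_sub_sq_div_two_le_cos (x := 3 * π / 2 - 4.5)]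

theorem stmt_16_general {Ω : Type*} [MeasurableSpace Ω] (μ : Measure Ω) [IsProbabilityMeasure μ]
    (D : Measure ℝ) [IsProbabilityMeasure D] (hD01 : D (Set.Icc (0 : ℝ) 1) = 1)
    (X Y : Ω → ℝ) (hX : Measurable X) (hY : Measurable Y)
    (hind : ProbabilityTheory.IndepFun X Y μ)
    (hXd : μ.map X = D) (hYd : μ.map Y = D)
    (α : ℝ)
    (hcdf : ∀ x ∈ Set.Icc (-1 : ℝ) 1,
      (μ {ω | X ω - Y ω ≤ x}).toReal ≤ α * (x + 1)) :
    (∀ t : ℝ, Real.pi < t → t < 2 * Real.pi →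
      1 / 2 + (-Real.sin t) / (6 * t + 2 * Real.sin t) ≤ α) ∧
    (1 / 2 + (-Real.sin 4.5) / (27 + 2 * Real.sin 4.5) ≤ α) ∧
    ((0.539 : ℝ) < 1 / 2 + (-Real.sin 4.5) / (27 + 2 * Real.sin 4.5)) := by
  have hZ : Measurable fun ω => X ω - Y ω := hX.sub hY
  have hXY : μ.map X = μ.map Y := hXd.trans hYd.symm
  have := Measure.isProbabilityMeasure_map (μ := μ) hZ.aemeasurable
  have := isNegInvariant_map_sub hX hY hind hXY
  have hunit : ∀ {V : Ω → ℝ}, Measurable V → μ.map V = D → ∀ᵐ ω ∂μ, V ω ∈ Icc (0 : ℝ) 1 :=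
    fun hV hVD => ae_of_ae_map hV.aemeasurable <| by
      rw [hVD, ae_mem_iff_measure_eq measurableSet_Icc.nullMeasurableSet, hD01, measure_univ]
  have hsupp : ∀ᵐ z ∂(μ.map fun ω => X ω - Y ω), z ∈ Icc (-1 : ℝ) 1 := by
    refine (ae_map_iff hZ.aemeasurable measurableSet_Icc).2 ?_
    filter_upwards [hunit hX hXd, hunit hY hYd] with ω hx hy
    exact ⟨by linarith [hx.1, hy.2], by linarith [hx.2, hy.1]⟩
  have hcdf' : ∀ s ∈ Icc (-1 : ℝ) 1, cdf (μ.map fun ω => X ω - Y ω) s ≤ α * (s + 1) :=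
    fun s hs => by
      rw [cdf_eq_real, map_measureReal_apply hZ measurableSet_Iic]
      exact hcdf s hs
  have hbound : ∀ t : ℝ, π < t → t < 2 * π → 1 / 2 + -sin t / (6 * t + 2 * sin t) ≤ α :=
    fun t hπt ht => half_add_neg_sin_div_le_of_cdf_le hsupp hπt ht hcdf'
      (integral_cos_map_sub_nonneg hX hY hind hXY t)
  refine ⟨hbound, ?_, ?_⟩
  · simpa [show (6 : ℝ) * 4.5 = 27 by norm_num] using
      hbound 4.5 (by linarith [pi_lt_d2]) (by linarith [pi_gt_d2])
  · have hsin := sin_four_point_five_le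
    have hden : (0 : ℝ) < 27 + 2 * sin 4.5 := by linarith [neg_one_le_sin 4.5]
    rw [← sub_lt_iff_lt_add', lt_div_iff₀ hden]
    linarith

/-- Let `D` be a probability distribution supported on `[0,1]`, let `X`
and `Y` be independent samples from `D`, and suppose `α ≥ 1/2` satisfies
`Pr[X - Y ≤ x] ≤ α·(x+1)` for all `x ∈ [-1,1]`. Then for every `t ∈ (π, 2π)`,
`α ≥ 1/2 + (-sin t)/(6t + 2·sin t)`; in particular `t = 4.5` yields
`α ≥ 1/2 + (-sin 4.5)/(27 + 2·sin 4.5) > 0.539`. -/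
theorem stmt_16 {Ω : Type*} [MeasurableSpace Ω] (μ : Measure Ω) [IsProbabilityMeasure μ]
    (D : Measure ℝ) [IsProbabilityMeasure D] (hD01 : D (Set.Icc (0 : ℝ) 1) = 1)
    (X Y : Ω → ℝ) (hX : Measurable X) (hY : Measurable Y)
    (hind : ProbabilityTheory.IndepFun X Y μ)
    (hXd : μ.map X = D) (hYd : μ.map Y = D)
    (α : ℝ) (hα : 1 / 2 ≤ α)
    (hcdf : ∀ x ∈ Set.Icc (-1 : ℝ) 1,
      (μ {ω | X ω - Y ω ≤ x}).toReal ≤ α * (x + 1)) :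
    (∀ t : ℝ, Real.pi < t → t < 2 * Real.pi →
      1 / 2 + (-Real.sin t) / (6 * t + 2 * Real.sin t) ≤ α) ∧
    (1 / 2 + (-Real.sin 4.5) / (27 + 2 * Real.sin 4.5) ≤ α) ∧
    ((0.539 : ℝ) < 1 / 2 + (-Real.sin 4.5) / (27 + 2 * Real.sin 4.5)) :=
  stmt_16_general μ D hD01 X Y hX hY hind hXd hYd α hcdf
end

section
/- Let G=(V,A) be a finite directed graph whose vertex set is partitioned into two parts A' and B' such that every edge has one endpoint in A' and one in B' (a bipartite directed graph), with edge costs c_e ≥ 0, let k ≥ 1 be an integer, and let x : A → ℝ be a feasible LP solution, i.e., x_e ≥ 0 for all e and ∑_{e∈P} x_e ≥ 1 for every directed path P with k edges. Define a random labeling ℓ : V → [0,1] as follows: sample y uniformly from [0,1] and an independent fair coin b; if b = heads, set ℓ(v) = 0 for all v ∈ A' and ℓ(v) = y for all v ∈ B'; otherwise set ℓ(v) = y for all v ∈ A' and ℓ(v) = 0 for all v ∈ B'. Then for every edge e=(u,v) ∈ A, the random variable ℓ(v) − ℓ(u) is uniformly distributed on [-1,1], and letting S(ℓ) = { e=(u,v)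 ∈ A : ℓ(v) − ℓ(u) ≤ (k+1)·x_e − 1 }, we have E[∑_{e∈S(ℓ)} c_e] ≤ (1/2)·(k+1)·∑_{e∈A} c_e·x_e, and for every realization of ℓ the graph (V, A \ S(ℓ)) contains no directed path with k edges. -/
/-!
Each edge joins the two sides, so its label difference is `y` or `-y` according to the coin:
`±y` with `y` uniform on `[0,1]` is uniform on `[-1,1]`, and an edge is deleted with probability
`(k+1) x_e / 2`. Labels lie in `[0,1]`, so along a path with `k` edges the label differences
telescope to at most `1`; if no edge were deleted they would sum to more than
`(k+1) ∑ x_e - k ≥ 1`.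
-/

open MeasureTheory
open scoped Classical ENNReal

theorem MeasureTheory.Measure.map_prod_fairCoin {α β : Type*} [MeasurableSpace α]
    [MeasurableSpace β] (μ : Measure α) [SFinite μ] {f : α × Bool → β} (hf : Measurable f) :
    (μ.prod ((2⁻¹ : ℝ≥0∞) • Measure.dirac true + (2⁻¹ : ℝ≥0∞) • Measure.dirac false)).map f
      = (2⁻¹ : ℝ≥0∞) • μ.map (fun a => f (a, true))
        + (2⁻¹ : ℝ≥0∞) • μ.map (fun a => f (a, false)) := by
  rw [Measure.prod_add, Measure.prod_smul_right, Measure.prod_smul_right, Measure.prod_dirac,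
    Measure.prod_dirac, Measure.map_add _ _ hf, Measure.map_smul, Measure.map_smul,
    Measure.map_map hf measurable_prodMk_right, Measure.map_map hf measurable_prodMk_right]
  rfl

theorem integral_sum_ite_le {ι Ω : Type*} [MeasurableSpace Ω] (P : Measure Ω)
    [IsFiniteMeasure P] (s : Finset ι) (D : ι → Ω → ℝ) (t c b : ι → ℝ) (hD : ∀ i ∈ s, Measurable (D i))
    (hc : ∀ i ∈ s, 0 ≤ c i) (hb : ∀ i ∈ s, (P {ω | D i ω ≤ t i}).toReal ≤ b i) :
    ∫ ω, (∑ i ∈ s, if D i ω ≤ t i then c i else 0) ∂P ≤ ∑ i ∈ s, c i * b i := by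
  have hind i : (fun ω => if D i ω ≤ t i then c i else 0)
      = {ω | D i ω ≤ t i}.indicator (fun _ => c i) := by
    ext ω
    simp [Set.indicator_apply]
  have hS i (hi : i ∈ s) : MeasurableSet {ω | D i ω ≤ t i} :=
    measurableSet_le (hD i hi) measurable_const
  rw [integral_finsetSum s fun i hi => hind i ▸ (integrable_const (c i)).indicator (hS i hi)]
  refine Finset.sum_le_sum fun i hi => ?_
  rw [hind, integral_indicator_const _ (hS i hi), smul_eq_mul, mul_comm]
  exact mul_le_mul_of_nonneg_left (hb i hi) (hc i hi)

theorem Fin.sum_succ_sub_castSucc {M : Type*} [AddCommGroup M] {n : ℕ} (f : Fin (n + 1) → M) :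
    ∑ i : Fin n, (f i.succ - f i.castSucc) = f (Fin.last n) - f 0 := by
  induction n with
  | zero => simp
  | succ n ih =>
    rw [Fin.sum_univ_castSucc]
    simp_rw [Fin.succ_castSucc]
    rw [ih (fun i => f i.castSucc)]
    simp

theorem Real.map_neg_volume_restrict_Icc (a b : ℝ) :
    (volume.restrict (Set.Icc a b)).map Neg.neg = volume.restrict (Set.Icc (-b) (-a)) := by
  conv_rhs => rw [← Measure.map_neg_eq_self (volume : Measure ℝ)]
  rw [Measure.restrict_map measurable_neg measurableSet_Icc]
  simp

theorem Real.volume_restrict_Icc_add {a b c : ℝ} (hab : a ≤ b) (hbc : b ≤ c) :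
    volume.restrict (Set.Icc a b) + volume.restrict (Set.Icc b c)
      = volume.restrict (Set.Icc a c) := by
  rw [← restrict_Ico_eq_restrict_Icc, ← Measure.restrict_union _ measurableSet_Icc,
    Set.Ico_union_Icc_eq_Icc hab hbc]
  exact Set.disjoint_left.2 fun _ hx hx' => hx.2.not_ge hx'.1

def signedSample (ε : Bool) (p : ℝ × Bool) : ℝ := if p.2 = ε then p.1 else -p.1

theorem measurable_signedSample (ε : Bool) : Measurable (signedSample ε) :=
  Measurable.ite (measurable_snd (MeasurableSet.singleton ε)) measurable_fst measurable_fst.neg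

theorem map_signedSample {a : ℝ} (ha : 0 ≤ a) (ε : Bool) :
    ((volume.restrict (Set.Icc 0 a)).prod
        ((2⁻¹ : ℝ≥0∞) • Measure.dirac true + (2⁻¹ : ℝ≥0∞) • Measure.dirac false)).map
      (signedSample ε) = (2⁻¹ : ℝ≥0∞) • volume.restrict (Set.Icc (-a) a) := by
  rw [Measure.map_prod_fairCoin _ (measurable_signedSample ε),
    ← Real.volume_restrict_Icc_add (neg_nonpos.2 ha) ha, smul_add]
  cases ε <;> simp [signedSample, Real.map_neg_volume_restrict_Icc, add_comm]

theorem toReal_measure_le_of_map_eq_uniform {Ω : Type*} [MeasurableSpace Ω] {P : Measure Ω}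
    {D : Ω → ℝ} (hD : Measurable D)
    (hmap : P.map D = (2⁻¹ : ℝ≥0∞) • volume.restrict (Set.Icc (-1) 1)) {t : ℝ} (ht : 0 ≤ t) :
    (P {ω | D ω ≤ t - 1}).toReal ≤ t / 2 := by
  have hle : P {ω | D ω ≤ t - 1} ≤ 2⁻¹ * ENNReal.ofReal t :=
    calc P {ω | D ω ≤ t - 1} = 2⁻¹ * volume (Set.Iic (t - 1) ∩ Set.Icc (-1) 1) := by
          rw [← Measure.restrict_apply measurableSet_Iic, ← smul_eq_mul, ← Measure.smul_apply,
            ← hmap, Measure.map_apply hD measurableSet_Iic]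
          rfl
      _ ≤ 2⁻¹ * volume (Set.Icc (-1) (t - 1)) := by
          gcongr
          exact fun z ⟨hz1, hz2, _⟩ => ⟨hz2, hz1⟩
      _ = 2⁻¹ * ENNReal.ofReal t := by rw [Real.volume_Icc]; ring_nf
  calc (P {ω | D ω ≤ t - 1}).toReal ≤ (2⁻¹ * ENNReal.ofReal t).toReal :=
        ENNReal.toReal_mono (by finiteness) hle
    _ = t / 2 := by rw [ENNReal.toReal_mul, ENNReal.toReal_ofReal ht]; norm_num; ring

theorem exists_cut_edge_of_one_le_sum {V : Type*} {k : ℕ} (x : V × V → ℝ) (ℓ : V → ℝ)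
    (hℓ : ∀ v, ℓ v ∈ Set.Icc (0 : ℝ) 1) (p : Fin (k + 1) → V)
    (hp : 1 ≤ ∑ i : Fin k, x (p i.castSucc, p i.succ)) :
    ∃ i : Fin k, ℓ (p i.succ) - ℓ (p i.castSucc) ≤ (k + 1) * x (p i.castSucc, p i.succ) - 1 := by
  by_contra! hcut
  have hk : (Finset.univ : Finset (Fin k)).Nonempty :=
    Finset.nonempty_of_sum_ne_zero (by linarith : ∑ i : Fin k, x (p i.castSucc, p i.succ) ≠ 0)
  have htel : ∑ i : Fin k, (ℓ (p i.succ) - ℓ (p i.castSucc)) = ℓ (p (Fin.last k)) - ℓ (p 0) :=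
    Fin.sum_succ_sub_castSucc (ℓ ∘ p)
  have hlast := (hℓ (p (Fin.last k))).2
  have hfirst := (hℓ (p 0)).1
  refine lt_irrefl (1 : ℝ) ?_
  calc (1 : ℝ) = (k + 1) * 1 - k := by ring
    _ ≤ (k + 1) * ∑ i : Fin k, x (p i.castSucc, p i.succ) - k := by gcongr
    _ = ∑ i : Fin k, ((k + 1) * x (p i.castSucc, p i.succ) - 1) := by
        simp [Finset.sum_sub_distrib, Finset.mul_sum]
    _ < ∑ i : Fin k, (ℓ (p i.succ) - ℓ (p i.castSucc)) :=
        Finset.sum_lt_sum_of_nonempty hk fun i _ => hcut i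
    _ ≤ 1 := by linarith

section Labeling

variable {V : Type*} {A' : Set V} {L : ℝ × Bool → V → ℝ}
  (hL : ∀ (y : ℝ) (b : Bool) (v : V),
    L (y, b) v = if v ∈ A' then (if b then 0 else y) else (if b then y else 0))
include hL

theorem label_mem_Icc {y : ℝ} (hy : y ∈ Set.Icc (0 : ℝ) 1) (b : Bool) (v : V) :
    L (y, b) v ∈ Set.Icc (0 : ℝ) 1 := by
  rw [hL]
  split_ifs <;> simp_all

theorem exists_labelDiff_eq_signedSample {u v : V}
    (huv : (u ∈ A' ∧ v ∉ A') ∨ (u ∉ A' ∧ v ∈ A')) :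
    ∃ ε, (fun p => L p v - L p u) = signedSample ε := by
  rcases huv with ⟨hu, hv⟩ | ⟨hu, hv⟩
  · refine ⟨true, funext fun ⟨y, b⟩ => ?_⟩
    cases b <;> simp [hL, hu, hv, signedSample]
  · refine ⟨false, funext fun ⟨y, b⟩ => ?_⟩
    cases b <;> simp [hL, hu, hv, signedSample]

end Labeling

theorem stmt_17_general {V : Type*} (A : Finset (V × V)) (A' : Set V)
    (hbip : ∀ e ∈ A, (e.1 ∈ A' ∧ e.2 ∉ A') ∨ (e.1 ∉ A' ∧ e.2 ∈ A'))
    (c : V × V → ℝ) (hc : ∀ e ∈ A, 0 ≤ c e)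
    (k : ℕ) (x : V × V → ℝ)
    (hx_nonneg : ∀ e ∈ A, 0 ≤ x e)
    (hx_path : ∀ p : Fin (k + 1) → V,
      (∀ i : Fin k, (p i.castSucc, p i.succ) ∈ A) →
      1 ≤ ∑ i : Fin k, x (p i.castSucc, p i.succ))
    (L : ℝ × Bool → V → ℝ)
    (hL : ∀ (y : ℝ) (b : Bool) (v : V),
      L (y, b) v = if v ∈ A' then (if b then 0 else y) else (if b then y else 0))
    (P : Measure (ℝ × Bool))
    (hP : P = (volume.restrict (Set.Icc (0 : ℝ) 1)).prod
      ((2⁻¹ : ℝ≥0∞) • Measure.dirac true + (2⁻¹ : ℝ≥0∞) • Measure.dirac false)) :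
    (∀ e ∈ A, P.map (fun p => L p e.2 - L p e.1)
        = (2⁻¹ : ℝ≥0∞) • volume.restrict (Set.Icc (-1 : ℝ) 1)) ∧
    (∫ p, (∑ e ∈ A, if L p e.2 - L p e.1 ≤ (k + 1) * x e - 1 then c e else 0) ∂P
      ≤ 1 / 2 * (k + 1) * ∑ e ∈ A, c e * x e) ∧
    (∀ y ∈ Set.Icc (0 : ℝ) 1, ∀ b : Bool,
      ¬ ∃ p : Fin (k + 1) → V, ∀ i : Fin k,
          (p i.castSucc, p i.succ) ∈ A ∧
          ¬ (L (y, b) (p i.succ) - L (y, b) (p i.castSucc)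
              ≤ (k + 1) * x (p i.castSucc, p i.succ) - 1)) := by
  have hdiff e (he : e ∈ A) := exists_labelDiff_eq_signedSample hL (hbip e he)
  have hmeas e (he : e ∈ A) : Measurable fun p => L p e.2 - L p e.1 := by
    obtain ⟨ε, hε⟩ := hdiff e he
    exact hε ▸ measurable_signedSample ε
  have hunif : ∀ e ∈ A, P.map (fun p => L p e.2 - L p e.1)
      = (2⁻¹ : ℝ≥0∞) • volume.restrict (Set.Icc (-1 : ℝ) 1) := fun e he => by
    obtain ⟨ε, hε⟩ := hdiff e he
    rw [hε, hP]
    exact map_signedSample zero_le_one ε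
  have : IsFiniteMeasure P := ⟨by simp [hP, ← Set.univ_prod_univ, Measure.prod_prod]⟩
  refine ⟨hunif, ?_, ?_⟩
  · calc _ ≤ ∑ e ∈ A, c e * ((k + 1) * x e / 2) :=
          integral_sum_ite_le P A _ _ c _ hmeas hc fun e he =>
            toReal_measure_le_of_map_eq_uniform (hmeas e he) (hunif e he)
              (by have := hx_nonneg e he; positivity)
      _ = 1 / 2 * (k + 1) * ∑ e ∈ A, c e * x e := by
          rw [Finset.mul_sum]
          exact Finset.sum_congr rfl fun e _ => by ring
  · rintro y hy b ⟨p, hp⟩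
    obtain ⟨i, hcut⟩ := exists_cut_edge_of_one_le_sum x (L (y, b)) (label_mem_Icc hL hy b) p
      (hx_path p fun i => (hp i).1)
    exact (hp i).2 hcut

/-- Let `(V, A)` be a finite bipartite directed graph with bipartition
`(A', B')` (every edge has one endpoint in `A'` and one outside `A'`), nonnegative edge
costs `c`, `k ≥ 1`, and a feasible LP solution `x`. Sample `y` uniformly from `[0,1]` and
an independent fair coin `b`, and define the labeling `L (y,b)` that assigns `0` to one
side and `y` to the other according to `b`. Then for every edge `e = (u,v) ∈ A` the
random variable `L (y,b) v - L (y,b) u` is uniformly distributed on `[-1,1]`; the expected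
cost of the deleted set `S(ℓ) = {e = (u,v) ∈ A : ℓ v - ℓ u ≤ (k+1)·x e - 1}` is at most
`(1/2)·(k+1)·∑_{e ∈ A} c e · x e`; and for every realization of the labeling the remaining
graph has no directed path with `k` edges. -/
theorem stmt_17 {V : Type*} [Fintype V] (A : Finset (V × V)) (A' : Set V)
    (hbip : ∀ e ∈ A, (e.1 ∈ A' ∧ e.2 ∉ A') ∨ (e.1 ∉ A' ∧ e.2 ∈ A'))
    (c : V × V → ℝ) (hc : ∀ e ∈ A, 0 ≤ c e)
    (k : ℕ) (hk : 1 ≤ k) (x : V × V → ℝ)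
    (hx_nonneg : ∀ e ∈ A, 0 ≤ x e)
    (hx_path : ∀ p : Fin (k + 1) → V,
      (∀ i : Fin k, (p i.castSucc, p i.succ) ∈ A) →
      1 ≤ ∑ i : Fin k, x (p i.castSucc, p i.succ))
    (L : ℝ × Bool → V → ℝ)
    (hL : ∀ (y : ℝ) (b : Bool) (v : V),
      L (y, b) v = if v ∈ A' then (if b then 0 else y) else (if b then y else 0))
    (P : Measure (ℝ × Bool))
    (hP : P = (volume.restrict (Set.Icc (0 : ℝ) 1)).prod
      ((2⁻¹ : ℝ≥0∞) • Measure.dirac true + (2⁻¹ : ℝ≥0∞) • Measure.dirac false)) :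
    (∀ e ∈ A, P.map (fun p => L p e.2 - L p e.1)
        = (2⁻¹ : ℝ≥0∞) • volume.restrict (Set.Icc (-1 : ℝ) 1)) ∧
    (∫ p, (∑ e ∈ A, if L p e.2 - L p e.1 ≤ (k + 1) * x e - 1 then c e else 0) ∂P
      ≤ 1 / 2 * (k + 1) * ∑ e ∈ A, c e * x e) ∧
    (∀ y ∈ Set.Icc (0 : ℝ) 1, ∀ b : Bool,
      ¬ ∃ p : Fin (k + 1) → V, ∀ i : Fin k,
          (p i.castSucc, p i.succ) ∈ A ∧
          ¬ (L (y, b) (p i.succ) - L (y, b) (p i.castSucc)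
              ≤ (k + 1) * x (p i.castSucc, p i.succ) - 1)) :=
  stmt_17_general A A' hbip c hc k x hx_nonneg hx_path L hL P hP
end
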